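/- Assume M = U Λ U⁻¹ is diagonalizable with U ∈ ℝ^{n×n} invertible and Λ real diagonal. Then the aNGMRES(m, m+1) iterates from any u₀ satisfy ‖r_{j(m+1)}‖ ≤ (χ(m+1) · κ₂(U))^j · ‖r₀‖ for all j ≥ 1. -/

import Mathlib

open Matrix Polynomial Set

noncomputable section

/-- Matrix–vector product, landing in Euclidean space. -/
def mulVecE {n : ℕ} (M : Matrix (Fin n) (Fin n) ℝ) (v : EuclideanSpace ℝ (Fin n)) :
    EuclideanSpace ℝ (Fin n) :=
  WithLp.toLp 2 (M.mulVec v)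

/-- Residual `r(u) = A u - b`. -/
def res {n : ℕ} (A : Matrix (Fin n) (Fin n) ℝ) (b u : EuclideanSpace ℝ (Fin n)) :
    EuclideanSpace ℝ (Fin n) :=
  mulVecE A u - b

/-- Richardson fixed-point map `q(u) = (I - A) u + b = M u + b` with `M = I - A`. -/
def fp {n : ℕ} (A : Matrix (Fin n) (Fin n) ℝ) (b u : EuclideanSpace ℝ (Fin n)) :
    EuclideanSpace ℝ (Fin n) :=
  mulVecE (1 - A) u + b

/-- The NGMRES(m) least-squares objective at step `k`:
`β ↦ ‖r(q(u_k)) + Σ_{i=0}^m β_i (r(q(u_k)) - r(u_{k-i}))‖`. -/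
def ngObj {n : ℕ} (A : Matrix (Fin n) (Fin n) ℝ) (b : EuclideanSpace ℝ (Fin n))
    (m : ℕ) (prev : ℕ → EuclideanSpace ℝ (Fin n)) (k : ℕ) (β : Fin (m+1) → ℝ) : ℝ :=
  ‖res A b (fp A b (prev k)) +
    ∑ i : Fin (m+1), β i • (res A b (fp A b (prev k)) - res A b (prev (k - (i : ℕ))))‖

/-- `next` is produced from `prev (k-m), …, prev k` by a single NGMRES(m) step:
`next = q(u_k) + Σ_{i=0}^m β_i (q(u_k) - u_{k-i})` where `β` minimizes the
least-squares objective `ngObj`. -/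
def NGMRESStep {n : ℕ} (A : Matrix (Fin n) (Fin n) ℝ) (b : EuclideanSpace ℝ (Fin n))
    (m : ℕ) (prev : ℕ → EuclideanSpace ℝ (Fin n)) (k : ℕ)
    (next : EuclideanSpace ℝ (Fin n)) : Prop :=
  ∃ β : Fin (m+1) → ℝ,
    (∀ γ : Fin (m+1) → ℝ, ngObj A b m prev k β ≤ ngObj A b m prev k γ) ∧
    next = fp A b (prev k) +
      ∑ i : Fin (m+1), β i • (fp A b (prev k) - prev (k - (i : ℕ)))

/-- The spectral (ℓ²-operator) norm of a matrix. -/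
def opNorm {n : ℕ} (M : Matrix (Fin n) (Fin n) ℝ) : ℝ :=
  ‖(Matrix.toEuclideanCLM (𝕜 := ℝ) M : EuclideanSpace ℝ (Fin n) →L[ℝ] EuclideanSpace ℝ (Fin n))‖

/-- The 2-norm condition number `κ₂(U) = ‖U‖ ‖U⁻¹‖`. -/
def condNum {n : ℕ} (U : Matrix (Fin n) (Fin n) ℝ) : ℝ :=
  opNorm U * opNorm U⁻¹

/-- `ε(a,b,s)`: minimum over real polynomials `p` of degree at most `s` with `p(1) = 1`
of `max_{t ∈ [1/b, 1/a]} |p(t)|`. -/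
def eps (a b : ℝ) (s : ℕ) : ℝ :=
  sInf {t : ℝ | ∃ p : Polynomial ℝ, p.natDegree ≤ s ∧ p.eval 1 = 1 ∧
    t = sSup ((fun x => |p.eval x|) '' Set.Icc (1/b) (1/a))}

/-- `χ(s)`: minimum over real polynomials `p` of degree at most `s` with `p(1) = 1`
of `max_{λ ∈ Σ(M)} |p(λ)|`, where `Σ(M)` is the set of eigenvalues of `M`. -/
def chiSp {n : ℕ} (M : Matrix (Fin n) (Fin n) ℝ) (s : ℕ) : ℝ :=
  sInf {t : ℝ | ∃ p : Polynomial ℝ, p.natDegree ≤ s ∧ p.eval 1 = 1 ∧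
    t = sSup ((fun x => |p.eval x|) '' spectrum ℝ M)}

/-- The Krylov subspace `K_k(A, r) = span{r, Ar, …, A^{k-1} r}`. -/
def Krylov {n : ℕ} (A : Matrix (Fin n) (Fin n) ℝ) (r : EuclideanSpace ℝ (Fin n)) (k : ℕ) :
    Submodule ℝ (EuclideanSpace ℝ (Fin n)) :=
  Submodule.span ℝ (Set.range fun i : Fin k => mulVecE (A ^ (i : ℕ)) r)

/-- The matrix `S_k = [u_{k-m+1}-u_{k-m}, …, u_k-u_{k-1}, q(u_k)-u_k] ∈ ℝ^{n×(m+1)}`. -/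
def Smat {n : ℕ} (A : Matrix (Fin n) (Fin n) ℝ) (b : EuclideanSpace ℝ (Fin n))
    (prev : ℕ → EuclideanSpace ℝ (Fin n)) (k m : ℕ) :
    Matrix (Fin n) (Fin (m+1)) ℝ :=
  Matrix.of fun r c =>
    if (c : ℕ) < m then prev (k - m + c + 1) r - prev (k - m + c) r
    else fp A b (prev k) r - prev k r

/-- `u` is the sequence of aNGMRES(m, p) iterates (with `m = ⊤` giving aNGMRES(∞, p)):
if `p ∤ k` then `u_k = q(u_{k-1})`, and if `p ∣ k` then `u_k` is produced by one
NGMRES(min(m, k-1)) step from `u_{k-1-m_k}, …, u_{k-1}`. -/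
def aNGMRES {n : ℕ} (A : Matrix (Fin n) (Fin n) ℝ) (b : EuclideanSpace ℝ (Fin n))
    (m : ℕ∞) (p : ℕ) (u : ℕ → EuclideanSpace ℝ (Fin n)) : Prop :=
  ∀ k, 1 ≤ k →
    (¬ p ∣ k → u k = fp A b (u (k-1))) ∧
    (p ∣ k → NGMRESStep A b (min m ((k : ℕ∞) - 1)).toNat u (k-1) (u k))

/-! Between two restarts aNGMRES(m, m+1) performs Richardson steps, so the residuals of the cycle
starting at `s = j(m+1)` are `M^t r_s`. Feeding the coefficients of any polynomial `p` of degree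
at most `m+1` with `p(1) = 1` into the NGMRES least-squares problem turns its objective into
`‖p(M) r_s‖`, which bounds the residual after the restart. Since `p(M) = U p(Λ) U⁻¹`, this is at
most `max_{Σ(M)} |p| · κ₂(U) · ‖r_s‖`; minimizing over `p` gives a factor `χ(m+1) κ₂(U)` per cycle. -/

open scoped Matrix.Norms.L2Operator

section Residual

variable {n : ℕ}

lemma mulVecE_eq_toEuclideanCLM (M : Matrix (Fin n) (Fin n) ℝ) (v : EuclideanSpace ℝ (Fin n)) :
    mulVecE M v = Matrix.toEuclideanCLM (𝕜 := ℝ) M v := rfl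

lemma norm_mulVecE_le (M : Matrix (Fin n) (Fin n) ℝ) (v : EuclideanSpace ℝ (Fin n)) :
    ‖mulVecE M v‖ ≤ ‖M‖ * ‖v‖ :=
  (Matrix.toEuclideanCLM (𝕜 := ℝ) M).le_opNorm v

lemma mulVecE_mulVecE (M N : Matrix (Fin n) (Fin n) ℝ) (v : EuclideanSpace ℝ (Fin n)) :
    mulVecE M (mulVecE N v) = mulVecE (M * N) v := by
  simp only [mulVecE_eq_toEuclideanCLM, map_mul, mul_apply_eq_comp]

lemma res_fp (A : Matrix (Fin n) (Fin n) ℝ) (b u : EuclideanSpace ℝ (Fin n)) :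
    res A b (fp A b u) = mulVecE (1 - A) (res A b u) := by
  simp only [res, fp, mulVecE_eq_toEuclideanCLM, map_sub, map_add, map_one, _root_.sub_apply,
    one_apply_eq_self]
  abel

lemma res_add_sum_smul_sub {ι : Type*} (s : Finset ι) (A : Matrix (Fin n) (Fin n) ℝ)
    (b x : EuclideanSpace ℝ (Fin n)) (β : ι → ℝ) (y : ι → EuclideanSpace ℝ (Fin n)) :
    res A b (x + ∑ i ∈ s, β i • (x - y i)) =
      res A b x + ∑ i ∈ s, β i • (res A b x - res A b (y i)) := by
  simp only [res, mulVecE_eq_toEuclideanCLM, map_add, map_sum, map_smul, map_sub]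
  abel_nf

end Residual

lemma Fin.sum_univ_sub_eq_sum_range {M : Type*} [AddCommMonoid M] (f : ℕ → M) (m : ℕ) :
    ∑ i : Fin (m + 1), f (m - i) = ∑ t ∈ Finset.range (m + 1), f t :=
  (Fin.sum_univ_eq_sum_range (fun i => f (m - i)) (m + 1)).trans
    (Finset.sum_range_reflect f (m + 1))

lemma aeval_eq_pow_add_sum_smul_sub_pow {R : Type*} [Ring R] [Algebra ℝ R] (x : R) {m : ℕ}
    (p : ℝ[X]) (hdeg : p.natDegree ≤ m + 1) (h1 : p.eval 1 = 1) :
    aeval x p =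
      x ^ (m + 1) + ∑ i : Fin (m + 1), (-p.coeff (m - i)) • (x ^ (m + 1) - x ^ (m - i)) := by
  have hcoeff : ∑ t ∈ Finset.range (m + 1), p.coeff t = 1 - p.coeff (m + 1) := by
    have h := Polynomial.eval_eq_sum_range' (p := p) (n := m + 2) (by omega) (1 : ℝ)
    rw [h1, Finset.sum_range_succ] at h
    simp only [one_pow, mul_one] at h
    linarith
  rw [Polynomial.aeval_eq_sum_range' (n := m + 2) (by omega), Finset.sum_range_succ]
  simp only [neg_smul, smul_sub, Finset.sum_neg_distrib, Finset.sum_sub_distrib, ← Finset.sum_smul,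
    Fin.sum_univ_sub_eq_sum_range, Fin.sum_univ_sub_eq_sum_range (fun t => p.coeff t • x ^ t),
    hcoeff, sub_smul, one_smul]
  abel

section NGMRES

variable {n : ℕ} {A : Matrix (Fin n) (Fin n) ℝ} {b : EuclideanSpace ℝ (Fin n)}

lemma NGMRESStep.norm_res_le {m k : ℕ} {prev : ℕ → EuclideanSpace ℝ (Fin n)}
    {next : EuclideanSpace ℝ (Fin n)} (h : NGMRESStep A b m prev k next) (γ : Fin (m + 1) → ℝ) :
    ‖res A b next‖ ≤ ngObj A b m prev k γ := by
  obtain ⟨β, hmin, rfl⟩ := h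
  rw [res_add_sum_smul_sub]
  exact hmin γ

lemma ngObj_eq_norm_mulVecE_aeval {m k : ℕ} {prev : ℕ → EuclideanSpace ℝ (Fin n)}
    {v : EuclideanSpace ℝ (Fin n)}
    (hprev : ∀ i : Fin (m + 1), res A b (prev (k - i)) = mulVecE ((1 - A) ^ (m - i)) v)
    (p : ℝ[X]) (hdeg : p.natDegree ≤ m + 1) (h1 : p.eval 1 = 1) :
    ngObj A b m prev k (fun i => -p.coeff (m - i)) = ‖mulVecE (aeval (1 - A) p) v‖ := by
  have hfp : res A b (fp A b (prev k)) = mulVecE ((1 - A) ^ (m + 1)) v := by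
    simpa [res_fp, mulVecE_mulVecE, pow_succ'] using congrArg (mulVecE (1 - A)) (hprev 0)
  rw [aeval_eq_pow_add_sum_smul_sub_pow _ p hdeg h1]
  simp only [ngObj, hfp, hprev, mulVecE_eq_toEuclideanCLM, map_add, map_sum, map_smul, map_sub,
    _root_.add_apply, _root_.sum_apply, _root_.smul_apply, _root_.sub_apply]

end NGMRES

section Diagonalizable

variable {ι : Type*} [Fintype ι] [DecidableEq ι] {U : Matrix ι ι ℝ}

lemma spectrum_conj_diagonal (hU : IsUnit U) (d : ι → ℝ) :
    spectrum ℝ (U * diagonal d * U⁻¹) = range d := by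
  obtain ⟨u, rfl⟩ := hU
  rw [← Matrix.coe_units_inv, spectrum.units_conjugate, spectrum_diagonal]

lemma aeval_conj_diagonal (hU : IsUnit U) (d : ι → ℝ) (p : ℝ[X]) :
    aeval (U * diagonal d * U⁻¹) p = U * diagonal (fun i => p.eval (d i)) * U⁻¹ := by
  obtain ⟨u, rfl⟩ := hU
  have := aeval_algHom_apply (MulSemiringAction.toAlgHom ℝ (Matrix ι ι ℝ) (ConjAct.toConjAct u))
    (diagonal d) p
  have hdiag := aeval_algHom_apply (diagonalAlgHom ℝ : (ι → ℝ) →ₐ[ℝ] Matrix ι ι ℝ) d p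
  simp only [MulSemiringAction.toAlgHom_apply, ConjAct.units_smul_def,
    ConjAct.ofConjAct_toConjAct] at this
  simp only [diagonalAlgHom_apply, aeval_pi_apply, coe_aeval_eq_eval] at hdiag
  rw [← Matrix.coe_units_inv, this, hdiag]

lemma norm_aeval_conj_diagonal_le (hU : IsUnit U) (d : ι → ℝ) (p : ℝ[X]) :
    ‖aeval (U * diagonal d * U⁻¹) p‖ ≤
      sSup ((fun x => |p.eval x|) '' spectrum ℝ (U * diagonal d * U⁻¹)) * (‖U‖ * ‖U⁻¹‖) := by
  rw [aeval_conj_diagonal hU, spectrum_conj_diagonal hU, ← range_comp]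
  set S := sSup (range ((fun x => |p.eval x|) ∘ d))
  have hle : ∀ i, |p.eval (d i)| ≤ S := fun i =>
    le_csSup (finite_range _).bddAbove ⟨i, rfl⟩
  have hS : 0 ≤ S := Real.sSup_nonneg (forall_mem_range.2 fun i => abs_nonneg _)
  have hdiag : ‖diagonal fun i => p.eval (d i)‖ ≤ S := by
    rw [l2_opNorm_diagonal]
    exact (pi_norm_le_iff_of_nonneg hS).2 hle
  calc ‖U * diagonal (fun i => p.eval (d i)) * U⁻¹‖
      ≤ ‖U‖ * ‖diagonal fun i => p.eval (d i)‖ * ‖U⁻¹‖ := by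
        grw [l2_opNorm_mul, l2_opNorm_mul]
    _ ≤ ‖U‖ * S * ‖U⁻¹‖ := by gcongr
    _ = S * (‖U‖ * ‖U⁻¹‖) := by ring

end Diagonalizable

section Chi

variable {n : ℕ}

lemma condNum_eq (U : Matrix (Fin n) (Fin n) ℝ) : condNum U = ‖U‖ * ‖U⁻¹‖ := rfl

lemma condNum_nonneg (U : Matrix (Fin n) (Fin n) ℝ) : 0 ≤ condNum U := by
  rw [condNum_eq]; positivity

lemma chiSp_nonneg (M : Matrix (Fin n) (Fin n) ℝ) (s : ℕ) : 0 ≤ chiSp M s :=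
  Real.sInf_nonneg fun _ ⟨_, _, _, ht⟩ =>
    ht ▸ Real.sSup_nonneg (forall_mem_image.2 fun _ _ => abs_nonneg _)

lemma le_chiSp_mul {M : Matrix (Fin n) (Fin n) ℝ} {s : ℕ} {c a : ℝ} (ha : 0 ≤ a)
    (h : ∀ p : ℝ[X], p.natDegree ≤ s → p.eval 1 = 1 →
      c ≤ sSup ((fun x => |p.eval x|) '' spectrum ℝ M) * a) :
    c ≤ chiSp M s * a := by
  rw [mul_comm, ← smul_eq_mul, chiSp, ← Real.sInf_smul_of_nonneg ha]
  refine le_csInf ⟨_, _, ⟨1, by simp, by simp, rfl⟩, rfl⟩ ?_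
  rintro _ ⟨_, ⟨p, hdeg, h1, rfl⟩, rfl⟩
  exact (h p hdeg h1).trans_eq (mul_comm _ _)

end Chi

namespace aNGMRES

variable {n : ℕ} {A : Matrix (Fin n) (Fin n) ℝ} {b : EuclideanSpace ℝ (Fin n)}
  {u : ℕ → EuclideanSpace ℝ (Fin n)}

lemma res_add_eq_pow {m : ℕ∞} {p : ℕ} (hu : aNGMRES A b m p u) {s : ℕ} (hs : p ∣ s) {t : ℕ}
    (ht : t < p) : res A b (u (s + t)) = mulVecE ((1 - A) ^ t) (res A b (u s)) := by
  induction t with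
  | zero => simp [mulVecE_eq_toEuclideanCLM]
  | succ t ih =>
    have hndvd : ¬ p ∣ s + (t + 1) := fun h =>
      absurd (Nat.le_of_dvd (by omega) ((Nat.dvd_add_right hs).1 h)) (by omega)
    rw [(hu (s + (t + 1)) (by omega)).1 hndvd, Nat.add_succ_sub_one, res_fp, ih (by omega),
      mulVecE_mulVecE, ← pow_succ']

lemma ngmresStep_restart {m : ℕ} (hu : aNGMRES A b m (m + 1) u) (j : ℕ) :
    NGMRESStep A b m u (j * (m + 1) + m) (u ((j + 1) * (m + 1))) := by
  have hk : (j + 1) * (m + 1) - 1 = j * (m + 1) + m := by rw [add_one_mul]; omega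
  have hm : (min (m : ℕ∞) (((j + 1) * (m + 1) : ℕ) - 1)).toNat = m := by
    have hle : (m : ℕ∞) ≤ (((j + 1) * (m + 1) : ℕ) : ℕ∞) - 1 := by
      rw [← ENat.natCast_one, ← ENat.natCast_sub]
      exact_mod_cast (by omega : m ≤ (j + 1) * (m + 1) - 1)
    rw [min_eq_left hle, ENat.toNat_natCast]
  simpa only [hk, hm] using
    (hu ((j + 1) * (m + 1)) (Nat.mul_pos j.succ_pos m.succ_pos)).2 (dvd_mul_left _ _)

lemma norm_res_restart_le {m : ℕ} (hu : aNGMRES A b m (m + 1) u) {U : Matrix (Fin n) (Fin n) ℝ}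
    {d : Fin n → ℝ} (hU : IsUnit U) (hM : 1 - A = U * diagonal d * U⁻¹) (j : ℕ) :
    ‖res A b (u ((j + 1) * (m + 1)))‖ ≤
      chiSp (1 - A) (m + 1) * condNum U * ‖res A b (u (j * (m + 1)))‖ := by
  set v := res A b (u (j * (m + 1)))
  have hprev : ∀ i : Fin (m + 1),
      res A b (u (j * (m + 1) + m - i)) = mulVecE ((1 - A) ^ (m - i)) v := fun i => by
    rw [Nat.add_sub_assoc (by omega), hu.res_add_eq_pow (dvd_mul_left _ _) (by omega)]
  rw [mul_assoc]
  refine le_chiSp_mul (mul_nonneg (condNum_nonneg U) (norm_nonneg v)) fun p hdeg h1 => ?_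
  calc ‖res A b (u ((j + 1) * (m + 1)))‖
      ≤ ngObj A b m u (j * (m + 1) + m) (fun i => -p.coeff (m - i)) :=
        (hu.ngmresStep_restart j).norm_res_le _
    _ = ‖mulVecE (aeval (1 - A) p) v‖ := ngObj_eq_norm_mulVecE_aeval hprev p hdeg h1
    _ ≤ ‖aeval (1 - A) p‖ * ‖v‖ := norm_mulVecE_le _ _
    _ ≤ sSup ((fun x => |p.eval x|) '' spectrum ℝ (1 - A)) * condNum U * ‖v‖ := by
        gcongr
        exact hM ▸ norm_aeval_conj_diagonal_le hU d p
    _ = _ := mul_assoc _ _ _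

end aNGMRES

theorem stmt_16_general {n m : ℕ} (A U : Matrix (Fin n) (Fin n) ℝ) (d : Fin n → ℝ)
    (hU : IsUnit U)
    (hM : (1 : Matrix (Fin n) (Fin n) ℝ) - A = U * Matrix.diagonal d * U⁻¹)
    (b : EuclideanSpace ℝ (Fin n)) (u : ℕ → EuclideanSpace ℝ (Fin n))
    (hu : aNGMRES A b (m : ℕ∞) (m+1) u) :
    ∀ j : ℕ, 1 ≤ j →
      ‖res A b (u (j * (m+1)))‖ ≤
        (chiSp ((1 : Matrix (Fin n) (Fin n) ℝ) - A) (m+1) * condNum U) ^ j *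
          ‖res A b (u 0)‖ := by
  intro j _
  simpa using le_geom (u := fun j => ‖res A b (u (j * (m + 1)))‖)
    (mul_nonneg (chiSp_nonneg _ _) (condNum_nonneg U)) j fun k _ => hu.norm_res_restart_le hU hM k

/-- aNGMRES(m, m+1), diagonalizable case:
`‖r_{j(m+1)}‖ ≤ (χ(m+1) κ₂(U))^j ‖r₀‖`. -/
theorem stmt_16 {n m : ℕ} (A U : Matrix (Fin n) (Fin n) ℝ) (d : Fin n → ℝ)
    (hA : IsUnit A) (hU : IsUnit U)
    (hM : (1 : Matrix (Fin n) (Fin n) ℝ) - A = U * Matrix.diagonal d * U⁻¹)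
    (b : EuclideanSpace ℝ (Fin n)) (u : ℕ → EuclideanSpace ℝ (Fin n))
    (hu : aNGMRES A b (m : ℕ∞) (m+1) u) :
    ∀ j : ℕ, 1 ≤ j →
      ‖res A b (u (j * (m+1)))‖ ≤
        (chiSp ((1 : Matrix (Fin n) (Fin n) ℝ) - A) (m+1) * condNum U) ^ j *
          ‖res A b (u 0)‖ :=
  stmt_16_general A U d hU hM b u hu

end
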